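/- Let G be a connected graph, t ≤ δ(G) with t ≥ 3, d = dyn_t(G), and n ≥ t. Then dyn_t(G □ K_n) ≤ td − (t² − 3t)/2 − d. -/

import Mathlib

/-!
Let `D` be a minimum `t`-monopoly of `G`, `d = |D|`. Seed row `j < t - 1` of `G □ K_n` with `D`
minus `j` of its vertices and row `t - 1` with one vertex. Once rows `0, …, j - 1` are active, every
vertex of row `j` has `j` active neighbours in its `K_n`-fibre, so inside row `j` it only needs
threshold `t - j`; since `δ(G) ≥ t`, `D` minus `j` vertices suffices for that. Row `t - 1` then
has threshold `1` and fills up by connectivity, and each later row has threshold `0`. The seed has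
`∑_{j < t-1} (d - j) + 1` vertices, and `d ≥ t` makes this the claimed bound.
-/

open SimpleGraph

/-- One step of the activation process: add every vertex having at least `τ v` active neighbors. -/
def activStep {V : Type*} (G : SimpleGraph V) (τ : V → ℕ) (A : Set V) : Set V :=
  A ∪ {v | τ v ≤ (G.neighborSet v ∩ A).ncard}

/-- `D` is a `τ`-dynamic monopoly: iterating the activation process from `D` activates all of `V`. -/
def IsDynMonopoly {V : Type*} (G : SimpleGraph V) (τ : V → ℕ) (D : Set V) : Prop :=
  ∃ k : ℕ, (activStep G τ)^[k] D = Set.univ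

/-- The `τ`-dynamic monopoly number: least cardinality of a `τ`-dynamic monopoly. -/
noncomputable def dynNum {V : Type*} (G : SimpleGraph V) (τ : V → ℕ) : ℕ :=
  sInf {k | ∃ D : Set V, IsDynMonopoly G τ D ∧ D.ncard = k}

/-- Dynamic monopoly number with constant threshold `t`. -/
noncomputable def dynNumC {V : Type*} (G : SimpleGraph V) (t : ℕ) : ℕ :=
  dynNum G (fun _ => t)

section Activation

variable {V : Type*} {G : SimpleGraph V} {τ : V → ℕ} {D F : Set V}

def IsActivationClosed (G : SimpleGraph V) (τ : V → ℕ) (F : Set V) : Prop :=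
  ∀ v, τ v ≤ (G.neighborSet v ∩ F).ncard → v ∈ F

lemma IsActivationClosed.mono {τ' : V → ℕ} (hF : IsActivationClosed G τ F) (hτ : ∀ v, τ v ≤ τ' v) :
    IsActivationClosed G τ' F :=
  fun v hv => hF v ((hτ v).trans hv)

lemma IsActivationClosed.activStep_subset [Finite V] {A : Set V} (hF : IsActivationClosed G τ F)
    (hA : A ⊆ F) : activStep G τ A ⊆ F := by
  rintro v (hv | hv)
  · exact hA hv
  · exact hF v (hv.trans (Set.ncard_le_ncard (Set.inter_subset_inter_right _ hA)))

lemma monotone_iterate_activStep (G : SimpleGraph V) (τ : V → ℕ) (D : Set V) :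
    Monotone fun k => (activStep G τ)^[k] D :=
  monotone_nat_of_le_succ fun k => by
    rw [Function.iterate_succ_apply']
    exact Set.subset_union_left

theorem isDynMonopoly_iff [Finite V] :
    IsDynMonopoly G τ D ↔ ∀ F, D ⊆ F → IsActivationClosed G τ F → F = Set.univ := by
  constructor
  · rintro ⟨k, hk⟩ F hDF hF
    have : ∀ k, (activStep G τ)^[k] D ⊆ F := by
      intro k
      induction k with
      | zero => exact hDF
      | succ k ih =>
        rw [Function.iterate_succ_apply']
        exact hF.activStep_subset ih
    exact Set.eq_univ_of_univ_subset (hk ▸ this k)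
  · intro h
    -- The increasing chain of active sets stabilises, and its limit is closed.
    obtain ⟨k, hk⟩ := WellFoundedGT.monotone_chain_condition
      ⟨_, monotone_iterate_activStep G τ D⟩
    refine ⟨k, h _ (monotone_iterate_activStep G τ D k.zero_le) fun v hv => ?_⟩
    have hstep : activStep G τ ((activStep G τ)^[k] D) = (activStep G τ)^[k] D := by
      rw [← Function.iterate_succ_apply' (activStep G τ)]
      exact (hk (k + 1) k.le_succ).symm
    exact hstep ▸ Or.inr hv

lemma dynNum_le_ncard (hD : IsDynMonopoly G τ D) : dynNum G τ ≤ D.ncard :=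
  Nat.sInf_le ⟨D, hD, rfl⟩

lemma exists_isDynMonopoly_ncard_eq_dynNum (G : SimpleGraph V) (τ : V → ℕ) :
    ∃ D, IsDynMonopoly G τ D ∧ D.ncard = dynNum G τ :=
  Nat.sInf_mem (s := {k | ∃ D, IsDynMonopoly G τ D ∧ D.ncard = k}) ⟨_, Set.univ, ⟨0, rfl⟩, rfl⟩

end Activation

section Finite

variable {V : Type*} [Finite V] {G : SimpleGraph V} {τ : V → ℕ} {D F : Set V}

lemma IsDynMonopoly.eq_univ (hD : IsDynMonopoly G τ D) (hDF : D ⊆ F)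
    (hF : IsActivationClosed G τ F) : F = Set.univ :=
  isDynMonopoly_iff.1 hD F hDF hF

lemma IsDynMonopoly.le_ncard [Nonempty V] {t : ℕ} (hD : IsDynMonopoly G (fun _ => t) D)
    (hδ : ∀ v, t ≤ (G.neighborSet v).ncard) : t ≤ D.ncard := by
  by_contra! hlt
  have hclosed : IsActivationClosed G (fun _ => t) D := fun v hv =>
    absurd (hv.trans (Set.ncard_le_ncard Set.inter_subset_right)) hlt.not_ge
  have huniv := hD.eq_univ subset_rfl hclosed
  obtain ⟨v⟩ := ‹Nonempty V›
  exact (hδ v).not_gt (hlt.trans_le' (huniv ▸ Set.ncard_le_ncard (Set.subset_univ _)))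

/-- `F ∪ X` is closed for `τ`, hence everything; then each vertex of `X` has `τ v - j` neighbours
outside `X`, all in `F`. -/
lemma IsDynMonopoly.eq_univ_of_diff {X : Set V} {j : ℕ} (hD : IsDynMonopoly G τ D)
    (hδ : ∀ v, τ v ≤ (G.neighborSet v).ncard) (hX : X.ncard ≤ j)
    (hF : IsActivationClosed G (fun v => τ v - j) F) (hDF : D \ X ⊆ F) : F = Set.univ := by
  have hFX : IsActivationClosed G τ (F ∪ X) := fun v hv => Or.inl <| hF v <| by
    have hsub : G.neighborSet v ∩ (F ∪ X) ⊆ (G.neighborSet v ∩ F) ∪ X :=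
      fun u ⟨hu, h⟩ => h.imp (fun h => ⟨hu, h⟩) id
    have := (Set.ncard_le_ncard hsub).trans (Set.ncard_union_le _ _)
    show τ v - j ≤ _
    omega
  have hcover : F ∪ X = Set.univ := hD.eq_univ (fun x hx => by
    by_cases hxX : x ∈ X
    · exact Or.inr hxX
    · exact Or.inl (hDF ⟨hx, hxX⟩)) hFX
  refine Set.eq_univ_of_forall fun v => hF v ?_
  have hsub : G.neighborSet v \ X ⊆ G.neighborSet v ∩ F := fun u hu =>
    ⟨hu.1, ((Set.mem_union _ _ _).1 (hcover ▸ Set.mem_univ u)).resolve_right hu.2⟩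
  have := Set.le_ncard_sdiff X (G.neighborSet v)
  have := Set.ncard_le_ncard hsub
  have := hδ v
  show τ v - j ≤ _
  omega

lemma IsActivationClosed.eq_univ_of_preconnected (hG : G.Preconnected)
    (hF : IsActivationClosed G (fun _ => 1) F) {w : V} (hw : w ∈ F) : F = Set.univ := by
  have hwalk : ∀ {a b : V}, G.Walk a b → a ∈ F → b ∈ F := by
    intro a b p
    induction p with
    | nil => exact id
    | cons hab _ ih =>
      exact fun ha => ih (hF _ ((Set.ncard_pos (Set.toFinite _)).2 ⟨_, hab.symm, ha⟩))
  exact Set.eq_univ_of_forall fun v => hwalk (hG w v).some hw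

end Finite

/-- `(v, r)` is adjacent to `(v, i)` for every `i ≠ r`, so each fully active row lowers the
threshold inside row `r` by one. -/
lemma IsActivationClosed.boxProd_row {V W : Type*} [Finite V] [Finite W] {G : SimpleGraph V}
    {τ : V × W → ℕ} {F : Set (V × W)} (hF : IsActivationClosed (G □ completeGraph W) τ F)
    {R : Set W} {r : W} (hr : r ∉ R) (hR : ∀ i ∈ R, ∀ v, (v, i) ∈ F) :
    IsActivationClosed G (fun v => τ (v, r) - R.ncard) {v | (v, r) ∈ F} := by
  intro v hv
  apply hF (v, r)
  have hsub : (·, r) '' (G.neighborSet v ∩ {u | (u, r) ∈ F}) ∪ (v, ·) '' R ⊆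
      (G □ completeGraph W).neighborSet (v, r) ∩ F := by
    rintro _ (⟨u, ⟨hadj, hu⟩, rfl⟩ | ⟨i, hi, rfl⟩)
    · exact ⟨Or.inl ⟨hadj, rfl⟩, hu⟩
    · exact ⟨Or.inr ⟨fun h : r = i => hr (h ▸ hi), rfl⟩, hR i hi v⟩
  have hdisj : Disjoint ((·, r) '' (G.neighborSet v ∩ {u | (u, r) ∈ F})) ((v, ·) '' R) :=
    Set.disjoint_left.2 <| by
      rintro _ ⟨u, -, rfl⟩ ⟨i, hi, h⟩
      obtain rfl : i = r := congrArg Prod.snd h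
      exact hr hi
  have := Set.ncard_le_ncard hsub
  rw [Set.ncard_union_eq hdisj, Set.ncard_image_of_injective _ (Prod.mk_left_injective r),
    Set.ncard_image_of_injective _ (Prod.mk_right_injective v)] at this
  change τ (v, r) - R.ncard ≤ _ at hv
  omega

theorem isDynMonopoly_boxProd_completeGraph {V : Type*} [Finite V] {G : SimpleGraph V}
    {t n : ℕ} {D : Set V} {S : Set (V × Fin n)} (hG : G.Preconnected)
    (hD : IsDynMonopoly G (fun _ => t) D) (hδ : ∀ v, t ≤ (G.neighborSet v).ncard)
    (hrows : ∀ i : Fin n, (i : ℕ) < t - 1 → (D \ {v | (v, i) ∈ S}).ncard ≤ i)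
    (hlast : ∀ i : Fin n, (i : ℕ) = t - 1 → ∃ w, (w, i) ∈ S) :
    IsDynMonopoly (G □ completeGraph (Fin n)) (fun _ => t) S := by
  refine isDynMonopoly_iff.2 fun F hSF hF => Set.eq_univ_of_forall fun ⟨v, r⟩ => ?_
  induction r using WellFoundedLT.induction generalizing v with
  | _ r ih =>
  have hslice : IsActivationClosed G (fun _ => t - r) {v | (v, r) ∈ F} := by
    simpa [Set.ncard_eq_toFinset_card'] using
      hF.boxProd_row (R := Set.Iio r) (lt_irrefl r) fun i hi u => ih i hi u
  rcases lt_trichotomy (r : ℕ) (t - 1) with hlt | heq | hgt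
  · refine Set.eq_univ_iff_forall.1 (hD.eq_univ_of_diff hδ (hrows r hlt) hslice ?_) v
    exact fun u hu => hSF (by_contra fun hnot => hu.2 ⟨hu.1, hnot⟩)
  · obtain ⟨w, hw⟩ := hlast r heq
    have hslice₁ : IsActivationClosed G (fun _ => 1) {v | (v, r) ∈ F} :=
      hslice.mono fun _ => by omega
    exact Set.eq_univ_iff_forall.1 (hslice₁.eq_univ_of_preconnected hG (hSF hw)) v
  · exact hslice v (by change t - r ≤ _; omega)

/-- Row `j < m` receives `D` minus `j` of its vertices, row `m` the single vertex `w`. -/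
lemma exists_rowSeed {V : Type*} [Finite V] (D : Set V) (w : V) (m n : ℕ) :
    ∃ S : Set (V × Fin n), (∀ i : Fin n, (i : ℕ) < m → (D \ {v | (v, i) ∈ S}).ncard ≤ i) ∧
      (∀ i : Fin n, (i : ℕ) = m → (w, i) ∈ S) ∧
      S.ncard ≤ ∑ j ∈ Finset.range m, (D.ncard - j) + 1 := by
  choose E hED hE using fun j => Set.exists_subset_card_eq (Nat.sub_le D.ncard j)
  have hrow : ∀ j, {i : Fin n | (i : ℕ) = j}.ncard ≤ 1 := fun j =>
    (Set.ncard_le_one (Set.toFinite _)).2 fun a ha b hb => Fin.ext (ha.trans hb.symm)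
  set S : Set (V × Fin n) :=
    (⋃ j ∈ Finset.range m, E j ×ˢ {i : Fin n | (i : ℕ) = j}) ∪ {w} ×ˢ {i : Fin n | (i : ℕ) = m}
  refine ⟨S, fun i hi => ?_, fun i hi => Or.inr ⟨rfl, hi⟩, ?_⟩
  · have hEi : E i ⊆ {v | (v, i) ∈ S} := fun v hv =>
      Or.inl (Set.mem_iUnion₂.2 ⟨(i : ℕ), Finset.mem_range.2 hi, hv, rfl⟩)
    calc (D \ _).ncard ≤ (D \ E i).ncard := Set.ncard_le_ncard (Set.sdiff_subset_sdiff_right hEi)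
      _ = D.ncard - (D.ncard - i) := by rw [Set.ncard_sdiff (hED i), hE]
      _ ≤ i := by omega
  · calc _ ≤ (⋃ j ∈ Finset.range m, E j ×ˢ {i : Fin n | (i : ℕ) = j}).ncard +
          ({w} ×ˢ {i : Fin n | (i : ℕ) = m}).ncard := Set.ncard_union_le _ _
      _ ≤ ∑ j ∈ Finset.range m, (E j ×ˢ {i : Fin n | (i : ℕ) = j}).ncard + 1 := by
        gcongr
        · exact Finset.set_ncard_biUnion_le _ _
        · rw [Set.ncard_prod, Set.ncard_singleton, one_mul]
          exact hrow m
      _ ≤ ∑ j ∈ Finset.range m, (D.ncard - j) + 1 := by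
        gcongr with j
        rw [Set.ncard_prod, hE]
        exact mul_le_of_le_one_right (Nat.zero_le _) (hrow j)

lemma two_mul_sum_range_sub {d m : ℕ} (hm : m ≤ d + 1) :
    2 * ((∑ j ∈ Finset.range m, (d - j) : ℕ) : ℤ) = 2 * m * d - m * (m - 1) := by
  induction m with
  | zero => simp
  | succ m ih =>
    rw [Finset.sum_range_succ, Nat.cast_add, Nat.cast_sub (by omega), mul_add, ih (by omega)]
    push_cast
    ring

lemma sum_range_sub_add_one_eq {d t : ℕ} (ht : 1 ≤ t) (htd : t ≤ d + 2) :
    ((∑ j ∈ Finset.range (t - 1), (d - j) + 1 : ℕ) : ℤ) =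
      t * d - ((t : ℤ) ^ 2 - 3 * t) / 2 - d := by
  set s : ℤ := ((∑ j ∈ Finset.range (t - 1), (d - j) : ℕ) : ℤ) with hs
  have hsum := two_mul_sum_range_sub (d := d) (m := t - 1) (by omega)
  rw [← hs, Nat.cast_sub ht, Nat.cast_one] at hsum
  have hq : (t : ℤ) ^ 2 - 3 * t = 2 * ((t - 1) * d - s - 1) := by linear_combination hsum
  rw [hq, Int.mul_ediv_cancel_left _ two_ne_zero, Nat.cast_add, ← hs, Nat.cast_one]
  ring

theorem dyn_boxProd_complete_general {V : Type*} [Fintype V] (G : SimpleGraph V)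
    (hconn : G.Connected) (t n : ℕ) (ht : 3 ≤ t)
    (hδ : ∀ v, t ≤ (G.neighborSet v).ncard) :
    (dynNumC (G.boxProd (completeGraph (Fin n))) t : ℤ) ≤
      (t : ℤ) * (dynNumC G t : ℤ) - ((t : ℤ) ^ 2 - 3 * (t : ℤ)) / 2 - (dynNumC G t : ℤ) := by
  have := hconn.nonempty
  obtain ⟨D, hD, hDcard⟩ : ∃ D, IsDynMonopoly G (fun _ => t) D ∧ D.ncard = dynNumC G t :=
    exists_isDynMonopoly_ncard_eq_dynNum G _
  obtain ⟨S, hrows, hlast, hS⟩ := exists_rowSeed D (Classical.arbitrary V) (t - 1) n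
  have hSmono := isDynMonopoly_boxProd_completeGraph hconn.preconnected hD hδ hrows
    fun i hi => ⟨_, hlast i hi⟩
  have htD := hD.le_ncard hδ
  calc (dynNumC (G □ completeGraph (Fin n)) t : ℤ)
      ≤ ((∑ j ∈ Finset.range (t - 1), (D.ncard - j) + 1 : ℕ) : ℤ) :=
        Nat.cast_le.2 ((dynNum_le_ncard hSmono).trans hS)
    _ = _ := by rw [sum_range_sub_add_one_eq (by omega) (by omega), hDcard]

/-- For a connected graph `G`, `3 ≤ t ≤ δ(G)` and `n ≥ t`,
`dyn_t(G □ K_n) ≤ t·d − (t² − 3t)/2 − d`, where `d = dyn_t(G)`. -/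
theorem dyn_boxProd_complete {V : Type*} [Fintype V] (G : SimpleGraph V)
    (hconn : G.Connected) (t n : ℕ) (ht : 3 ≤ t)
    (hδ : ∀ v, t ≤ (G.neighborSet v).ncard) (hn : t ≤ n) :
    (dynNumC (G.boxProd (completeGraph (Fin n))) t : ℤ) ≤
      (t : ℤ) * (dynNumC G t : ℤ) - ((t : ℤ) ^ 2 - 3 * (t : ℤ)) / 2 - (dynNumC G t : ℤ) :=
  dyn_boxProd_complete_general G hconn t n ht hδ
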